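/- Let l ≥ 3 and let n ≥ 2 with positive integers l_1,...,l_n summing to l. Then (1/2)·Σ_{k=1}^l 2^k · a_k + 2^(binom(l,2)) · binom(l; l_1,...,l_n) < ((e^4 + 3)/4) · 2^(binom(l,2)) · binom(l; l_1,...,l_n), where a_k = 2^(binom(l-k,2)) · Σ binom(l-k; j_1,...,j_n) · ∏_i binom(l_i+2, j_i+2), summed over tuples (j_1,...,j_n) with 0 ≤ j_i ≤ l_i and Σ j_i = l-k. -/

import Mathlib

/-!
Put `M = multinomial L`. Since `C(L_i + 2, j_i + 2) = C(L_i + 2, L_i - j_i)` and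
`L_i + 2 ≤ l + 1` (there are at least two positive parts), each summand of the inner sum of
`a_k` is at most `multinomial j · multinomial (L - j) · (l + 1)^k / k!`, and the multinomial
Vandermonde identity `∑_j multinomial j · multinomial (L - j) = M` gives
`k! · a_k ≤ 2^C(l-k,2) · (l + 1)^k · M`. For `k ≤ l - 2` the factor `(l + 1)^k` is absorbed by
`2^(C(l,2) - C(l-k,2))` because `(l + 1)^2 ≤ 2^(l+1)`, so these terms contribute at most
`(e² - 1) · 2^C(l,2) · M`; the terms `k = l - 1` and `k = l` are at most `4` and `32/3` times
`2^C(l,2) · M` by lower bounds on the factorial, and `e² > 7` finishes the comparison.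
-/

open Finset Nat Real

variable {ι : Type*}

theorem sum_piAntidiag_prod_choose [DecidableEq ι] (s : Finset ι) (L : ι → ℕ) (m : ℕ) :
    ∑ j ∈ piAntidiag s m, ∏ i ∈ s, (L i).choose (j i) = (∑ i ∈ s, L i).choose m := by
  induction s using Finset.cons_induction generalizing m with
  | empty => cases m <;> simp
  | cons a s ha ih =>
    rw [piAntidiag_cons ha, sum_disjiUnion, sum_cons, add_choose_eq]
    refine sum_congr rfl fun p _ => ?_
    rw [sum_map, ← ih p.2, mul_sum]
    refine sum_congr rfl fun g hg => ?_
    have hga : g a = 0 := not_imp_comm.1 ((mem_piAntidiag.1 hg).2 a) ha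
    rw [prod_cons]
    simp only [addRightEmbedding_apply, Pi.add_apply, hga, if_pos, zero_add]
    congr 1
    refine prod_congr rfl fun t ht => ?_
    rw [if_neg (ne_of_mem_of_not_mem ht ha), add_zero]

theorem multinomial_mul_multinomial_sub_mul_choose {s : Finset ι} {L j : ι → ℕ}
    (hj : ∀ i ∈ s, j i ≤ L i) :
    multinomial s j * multinomial s (L - j) * (∑ i ∈ s, L i).choose (∑ i ∈ s, j i) =
      multinomial s L * ∏ i ∈ s, (L i).choose (j i) := by
  have hsub : ∑ i ∈ s, (L - j) i = ∑ i ∈ s, L i - ∑ i ∈ s, j i := sum_tsub_distrib s hj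
  have hle : ∑ i ∈ s, j i ≤ ∑ i ∈ s, L i := sum_le_sum hj
  refine Nat.eq_of_mul_eq_mul_left
    (by positivity : 0 < (∏ i ∈ s, (j i)!) * ∏ i ∈ s, ((L - j) i)!) ?_
  calc (∏ i ∈ s, (j i)!) * (∏ i ∈ s, ((L - j) i)!) *
        (multinomial s j * multinomial s (L - j) * (∑ i ∈ s, L i).choose (∑ i ∈ s, j i))
      = (∑ i ∈ s, L i).choose (∑ i ∈ s, j i) * ((∏ i ∈ s, (j i)!) * multinomial s j) *
          ((∏ i ∈ s, ((L - j) i)!) * multinomial s (L - j)) := by ring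
    _ = (∏ i ∈ s, (L i)!) * multinomial s L := by
      rw [multinomial_spec, multinomial_spec, multinomial_spec, hsub,
        choose_mul_factorial_mul_factorial hle]
    _ = (∏ i ∈ s, (j i)!) * (∏ i ∈ s, ((L - j) i)!) *
          (multinomial s L * ∏ i ∈ s, (L i).choose (j i)) := by
      rw [← prod_congr rfl fun i hi => choose_mul_factorial_mul_factorial (hj i hi),
        prod_mul_distrib, prod_mul_distrib]
      simp only [Pi.sub_apply]
      ring

theorem sum_multinomial_mul_multinomial_sub [Fintype ι] [DecidableEq ι]
    (L : ι → ℕ) {m : ℕ} (hm : m ≤ ∑ i, L i) :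
    ∑ j ∈ piAntidiag univ m with ∀ i, j i ≤ L i,
      multinomial univ j * multinomial univ (L - j) = multinomial univ L := by
  refine Nat.eq_of_mul_eq_mul_right (choose_pos hm) ?_
  calc (∑ j ∈ piAntidiag univ m with ∀ i, j i ≤ L i,
          multinomial univ j * multinomial univ (L - j)) * (∑ i, L i).choose m
      = ∑ j ∈ piAntidiag univ m with ∀ i, j i ≤ L i,
          multinomial univ L * ∏ i, (L i).choose (j i) := by
        rw [sum_mul]
        refine sum_congr rfl fun j hj => ?_
        rw [mem_filter, mem_piAntidiag] at hj
        rw [← hj.1.1, multinomial_mul_multinomial_sub_mul_choose fun i _ => hj.2 i]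
    _ = ∑ j ∈ piAntidiag univ m, multinomial univ L * ∏ i, (L i).choose (j i) := by
        refine sum_filter_of_ne fun j _ hj i => ?_
        by_contra! hlt
        exact hj (by rw [prod_eq_zero (mem_univ i) (choose_eq_zero_of_lt hlt), mul_zero])
    _ = multinomial univ L * (∑ i, L i).choose m := by
        rw [← mul_sum, sum_piAntidiag_prod_choose]

theorem factorial_sub_mul_choose_add_two_le {a b : ℕ} (h : b ≤ a) :
    (a - b)! * (a + 2).choose (b + 2) ≤ (a + 2) ^ (a - b) := by
  rw [choose_symm_of_eq_add (by omega : a + 2 = b + 2 + (a - b)),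
    ← descFactorial_eq_factorial_mul_choose]
  exact descFactorial_le_pow _ _

theorem factorial_mul_prod_choose_add_two_le {s : Finset ι} {L j : ι → ℕ}
    (hj : ∀ i ∈ s, j i ≤ L i) {B : ℕ} (hB : ∀ i ∈ s, L i + 2 ≤ B) :
    (∑ i ∈ s, (L - j) i)! * ∏ i ∈ s, (L i + 2).choose (j i + 2) ≤
      multinomial s (L - j) * B ^ ∑ i ∈ s, (L - j) i := by
  rw [← multinomial_spec, mul_comm _ (multinomial _ _), mul_assoc, ← prod_mul_distrib,
    ← prod_pow_eq_pow_sum]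
  refine Nat.mul_le_mul_left _ (prod_le_prod' fun i hi => ?_)
  calc (L i - j i)! * (L i + 2).choose (j i + 2) ≤ (L i + 2) ^ (L i - j i) :=
        factorial_sub_mul_choose_add_two_le (hj i hi)
    _ ≤ B ^ (L i - j i) := Nat.pow_le_pow_left (hB i hi) _

def multinomialChooseSum {n : ℕ} (L : Fin n → ℕ) (m : ℕ) : ℕ :=
  ∑ j ∈ (Finset.Nat.antidiagonalTuple n m).filter (fun j => ∀ i, j i ≤ L i),
    Nat.multinomial Finset.univ j * ∏ i, Nat.choose (L i + 2) (j i + 2)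

theorem factorial_mul_multinomialChooseSum_le {n : ℕ} {L : Fin n → ℕ} {m k B : ℕ}
    (hmk : m + k = ∑ i, L i) (hB : ∀ i, L i + 2 ≤ B) :
    k ! * multinomialChooseSum L m ≤ B ^ k * multinomial univ L := by
  rw [multinomialChooseSum, ← piAntidiag_univ_fin_eq_antidiagonalTuple, mul_sum]
  calc ∑ j ∈ piAntidiag univ m with ∀ i, j i ≤ L i,
        k ! * (multinomial univ j * ∏ i, (L i + 2).choose (j i + 2))
      ≤ ∑ j ∈ piAntidiag univ m with ∀ i, j i ≤ L i,
        B ^ k * (multinomial univ j * multinomial univ (L - j)) := by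
        refine Finset.sum_le_sum fun j hj => ?_
        rw [mem_filter, mem_piAntidiag] at hj
        have hk : ∑ i, (L - j) i = k := by
          simp only [Pi.sub_apply]
          rw [sum_tsub_distrib univ fun i _ => hj.2 i, ← hmk, hj.1.1, Nat.add_sub_cancel_left]
        calc k ! * (multinomial univ j * ∏ i, (L i + 2).choose (j i + 2))
            = multinomial univ j * ((∑ i, (L - j) i)! * ∏ i, (L i + 2).choose (j i + 2)) := by
              rw [hk]; ring
          _ ≤ multinomial univ j * (multinomial univ (L - j) * B ^ k) := by
              rw [← hk]
              exact Nat.mul_le_mul_left _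
                (factorial_mul_prod_choose_add_two_le (fun i _ => hj.2 i) fun i _ => hB i)
          _ = B ^ k * (multinomial univ j * multinomial univ (L - j)) := by ring
    _ = B ^ k * multinomial univ L := by
        rw [← mul_sum]
        congr 1
        -- the two filters differ only in their decidability instances
        convert sum_multinomial_mul_multinomial_sub L (by omega : m ≤ ∑ i, L i)

theorem sq_two_pow_choose_two (l : ℕ) : (2 ^ l.choose 2) ^ 2 = 2 ^ (l * (l - 1)) := by
  rw [← pow_mul, choose_two_right, Nat.div_mul_cancel (even_mul_pred_self l).two_dvd]

theorem succ_sq_le_two_pow {l : ℕ} (hl : 3 ≤ l) : (l + 1) ^ 2 ≤ 2 ^ (l + 1) := by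
  induction l, hl using Nat.le_induction with
  | base => norm_num
  | succ l hl ih => rw [pow_succ 2]; nlinarith

theorem sq_succ_pow_le_two_pow {l : ℕ} (hl : 3 ≤ l) (k : ℕ) :
    ((l + 1) ^ k) ^ 2 ≤ 2 ^ ((l + 1) * k) := by
  rw [← pow_mul, mul_comm k, pow_mul, pow_mul]
  exact Nat.pow_le_pow_left (succ_sq_le_two_pow hl) k

theorem two_pow_choose_two_mul_pow_le {m k : ℕ} (hm : 2 ≤ m) (hl : 3 ≤ m + k) :
    2 ^ m.choose 2 * (m + k + 1) ^ k ≤ 2 ^ (m + k).choose 2 := by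
  refine (Nat.pow_le_pow_iff_left two_ne_zero).1 ?_
  rw [mul_pow, sq_two_pow_choose_two, sq_two_pow_choose_two]
  calc 2 ^ (m * (m - 1)) * ((m + k + 1) ^ k) ^ 2
      ≤ 2 ^ (m * (m - 1)) * 2 ^ ((m + k + 1) * k) :=
        Nat.mul_le_mul_left _ (sq_succ_pow_le_two_pow hl k)
    _ ≤ 2 ^ ((m + k) * (m + k - 1)) := by
      rw [← pow_add]
      refine Nat.pow_le_pow_right two_pos ?_
      obtain ⟨m, rfl⟩ := Nat.exists_eq_add_of_le hm
      simp only [show 2 + m - 1 = m + 1 by omega, show 2 + m + k - 1 = m + k + 1 by omega]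
      nlinarith

theorem eight_pow_le_sq_factorial {q : ℕ} (hq : 2 ≤ q) : 8 ^ q ≤ 16 * q ! ^ 2 := by
  obtain ⟨p, rfl⟩ := Nat.exists_eq_add_of_le hq
  have hfac : 2 ! * (2 + 1) ^ p ≤ (2 + p)! := factorial_mul_pow_le_factorial
  calc 8 ^ (2 + p) = 64 * 8 ^ p := by ring
    _ ≤ 64 * 9 ^ p := by gcongr; norm_num
    _ = 16 * (2 * 3 ^ p) ^ 2 := by rw [mul_pow, ← pow_mul, mul_comm p 2, pow_mul]; ring
    _ ≤ 16 * (2 + p)! ^ 2 := by gcongr; simpa using hfac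

theorem nine_mul_sixteen_pow_le_sq_factorial {l : ℕ} (hl : 3 ≤ l) :
    9 * 16 ^ l ≤ 1024 * l ! ^ 2 := by
  obtain ⟨p, rfl⟩ := Nat.exists_eq_add_of_le hl
  have hfac : 3 ! * (3 + 1) ^ p ≤ (3 + p)! := factorial_mul_pow_le_factorial
  calc 9 * 16 ^ (3 + p) = 1024 * (6 * 4 ^ p) ^ 2 := by rw [mul_pow, ← pow_mul, pow_mul']; ring
    _ ≤ 1024 * (3 + p)! ^ 2 := by gcongr; simpa [factorial] using hfac

theorem two_pow_mul_succ_succ_pow_le {q : ℕ} (hq : 2 ≤ q) :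
    2 ^ q * (q + 2) ^ q ≤ 4 * q ! * 2 ^ (q + 1).choose 2 := by
  refine (Nat.pow_le_pow_iff_left two_ne_zero).1 ?_
  rw [mul_pow, mul_pow, mul_pow, sq_two_pow_choose_two, add_tsub_cancel_right]
  calc (2 ^ q) ^ 2 * ((q + 1 + 1) ^ q) ^ 2
      ≤ (2 ^ q) ^ 2 * 2 ^ ((q + 1 + 1) * q) :=
        Nat.mul_le_mul_left _ (sq_succ_pow_le_two_pow (by omega) _)
    _ = 8 ^ q * 2 ^ ((q + 1) * q) := by
      rw [show 8 = 2 ^ 3 by rfl, ← pow_mul, ← pow_mul, ← pow_add, ← pow_add]; ring_nf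
    _ ≤ 16 * q ! ^ 2 * 2 ^ ((q + 1) * q) := Nat.mul_le_mul_right _ (eight_pow_le_sq_factorial hq)
    _ = 4 ^ 2 * q ! ^ 2 * 2 ^ ((q + 1) * q) := by ring

theorem three_mul_two_pow_mul_succ_pow_le {l : ℕ} (hl : 3 ≤ l) :
    3 * (2 ^ l * (l + 1) ^ l) ≤ 32 * l ! * 2 ^ l.choose 2 := by
  refine (Nat.pow_le_pow_iff_left two_ne_zero).1 ?_
  rw [mul_pow, mul_pow, mul_pow, mul_pow, sq_two_pow_choose_two]
  calc 3 ^ 2 * ((2 ^ l) ^ 2 * ((l + 1) ^ l) ^ 2)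
      ≤ 3 ^ 2 * ((2 ^ l) ^ 2 * 2 ^ ((l + 1) * l)) :=
        Nat.mul_le_mul_left _ (Nat.mul_le_mul_left _ (sq_succ_pow_le_two_pow hl _))
    _ = 9 * 16 ^ l * 2 ^ (l * (l - 1)) := by
      obtain ⟨p, rfl⟩ := Nat.exists_eq_add_of_le hl
      rw [show 16 = 2 ^ 4 by rfl, ← pow_mul, ← pow_mul, mul_assoc, ← pow_add, ← pow_add,
        show 3 + p - 1 = p + 2 by omega]
      ring_nf
    _ ≤ 1024 * l ! ^ 2 * 2 ^ (l * (l - 1)) :=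
      Nat.mul_le_mul_right _ (nine_mul_sixteen_pow_le_sq_factorial hl)
    _ = 32 ^ 2 * l ! ^ 2 * 2 ^ (l * (l - 1)) := by ring

theorem two_pow_mul_le_of_factorial_mul_le {q x M : ℕ} (hq : 2 ≤ q)
    (hx : q ! * x ≤ (q + 2) ^ q * M) : 2 ^ q * x ≤ 4 * (2 ^ (q + 1).choose 2 * M) := by
  refine Nat.le_of_mul_le_mul_left ?_ (factorial_pos q)
  calc q ! * (2 ^ q * x) = 2 ^ q * (q ! * x) := by ring
    _ ≤ 2 ^ q * (q + 2) ^ q * M := by rw [mul_assoc]; exact Nat.mul_le_mul_left _ hx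
    _ ≤ 4 * q ! * 2 ^ (q + 1).choose 2 * M :=
      Nat.mul_le_mul_right M (two_pow_mul_succ_succ_pow_le hq)
    _ = q ! * (4 * (2 ^ (q + 1).choose 2 * M)) := by ring

theorem three_mul_two_pow_mul_le_of_factorial_mul_le {l x M : ℕ} (hl : 3 ≤ l)
    (hx : l ! * x ≤ (l + 1) ^ l * M) : 3 * (2 ^ l * x) ≤ 32 * (2 ^ l.choose 2 * M) := by
  refine Nat.le_of_mul_le_mul_left ?_ (factorial_pos l)
  calc l ! * (3 * (2 ^ l * x)) = 3 * (2 ^ l * (l ! * x)) := by ring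
    _ ≤ 3 * (2 ^ l * ((l + 1) ^ l * M)) := Nat.mul_le_mul_left _ (Nat.mul_le_mul_left _ hx)
    _ = 3 * (2 ^ l * (l + 1) ^ l) * M := by ring
    _ ≤ 32 * l ! * 2 ^ l.choose 2 * M :=
      Nat.mul_le_mul_right M (three_mul_two_pow_mul_succ_pow_le hl)
    _ = l ! * (32 * (2 ^ l.choose 2 * M)) := by ring

theorem sum_Icc_two_pow_div_factorial_le (q : ℕ) :
    ∑ k ∈ Icc 1 q, (2 : ℝ) ^ k / k ! ≤ exp 2 - 1 := by
  have h := sum_le_exp_of_nonneg zero_le_two (q + 1)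
  rw [sum_range_eq_add_Ico _ (by omega : 0 < q + 1), Ico_add_one_right_eq_Icc] at h
  simpa [le_sub_iff_add_le'] using h

theorem sum_Icc_two_pow_mul_le {l M : ℕ} (hl : 3 ≤ l) {a : ℕ → ℕ}
    (h : ∀ k ≤ l, k ! * a k ≤ 2 ^ (l - k).choose 2 * (l + 1) ^ k * M) :
    ∑ k ∈ Icc 1 l, (2 : ℝ) ^ k * a k ≤ (exp 2 - 1 + 4 + 32 / 3) * (2 ^ l.choose 2 * M) := by
  obtain ⟨q, rfl⟩ : ∃ q, l = q + 2 := ⟨l - 2, by omega⟩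
  set C := 2 ^ (q + 2).choose 2 * M with hC
  have hlow : ∀ k ∈ Icc 1 q, (2 : ℝ) ^ k * a k ≤ 2 ^ k / k ! * C := by
    intro k hk
    rw [mem_Icc] at hk
    have hcoef := two_pow_choose_two_mul_pow_le (m := q + 2 - k) (k := k) (by omega) (by omega)
    rw [Nat.sub_add_cancel (by omega : k ≤ q + 2)] at hcoef
    have hk' : (k ! * a k : ℝ) ≤ C := by
      exact_mod_cast (h k (by omega)).trans (Nat.mul_le_mul_right M hcoef)
    rw [div_mul_eq_mul_div, le_div_iff₀ (by positivity), mul_assoc, mul_comm (a k : ℝ)]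
    exact mul_le_mul_of_nonneg_left hk' (by positivity)
  have hpen : (2 : ℝ) ^ (q + 1) * a (q + 1) ≤ 4 * C := by
    have h1 := h (q + 1) (by omega)
    rw [show q + 2 - (q + 1) = 1 by omega, choose_eq_zero_of_lt one_lt_two, pow_zero,
      one_mul] at h1
    exact_mod_cast two_pow_mul_le_of_factorial_mul_le (by omega) h1
  have htop : (3 : ℝ) * (2 ^ (q + 2) * a (q + 2)) ≤ 32 * C := by
    have h1 := h (q + 2) le_rfl
    rw [Nat.sub_self, choose_eq_zero_of_lt two_pos, pow_zero, one_mul] at h1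
    exact_mod_cast three_mul_two_pow_mul_le_of_factorial_mul_le hl h1
  have hlow' : ∑ k ∈ Icc 1 q, (2 : ℝ) ^ k * a k ≤ (exp 2 - 1) * C :=
    calc ∑ k ∈ Icc 1 q, (2 : ℝ) ^ k * a k ≤ ∑ k ∈ Icc 1 q, 2 ^ k / k ! * (C : ℝ) :=
          Finset.sum_le_sum hlow
      _ ≤ (exp 2 - 1) * C := by
        rw [← sum_mul]
        exact mul_le_mul_of_nonneg_right (sum_Icc_two_pow_div_factorial_le q) (by positivity)
  rw [sum_Icc_succ_top (by omega), sum_Icc_succ_top (by omega)]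
  push_cast [hC] at *
  linarith

theorem half_mul_exp_two_add_lt : 1 / 2 * (exp 2 - 1 + 4 + 32 / 3) + 1 < (exp 4 + 3) / 4 := by
  have he : exp 4 = exp 2 ^ 2 := by rw [← exp_nat_mul]; norm_num
  have he2 : 7 < exp 2 := by
    rw [show (2 : ℝ) = 1 + 1 by norm_num, exp_add]
    nlinarith [exp_one_gt_d9]
  rw [he]
  nlinarith

theorem stmt_13 (n : ℕ) (hn : 2 ≤ n) (l : ℕ) (hl : 3 ≤ l) (L : Fin n → ℕ)
    (hL : ∀ i, 0 < L i) (hsum : ∑ i, L i = l)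
    (a : ℕ → ℕ)
    (ha : ∀ k, a k = 2 ^ (Nat.choose (l - k) 2) *
      ∑ j ∈ (Finset.Nat.antidiagonalTuple n (l - k)).filter (fun j => ∀ i, j i ≤ L i),
        Nat.multinomial Finset.univ j * ∏ i, Nat.choose (L i + 2) (j i + 2)) :
    (1 / 2) * (∑ k ∈ Finset.Icc 1 l, (2 : ℝ) ^ k * (a k : ℝ)) +
        2 ^ (Nat.choose l 2) * (Nat.multinomial Finset.univ L : ℝ) <
      (Real.exp 4 + 3) / 4 * 2 ^ (Nat.choose l 2) * (Nat.multinomial Finset.univ L : ℝ) := by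
  have hB : ∀ i, L i + 2 ≤ l + 1 := by
    intro i
    have : Nontrivial (Fin n) := Fin.nontrivial_iff_two_le.2 hn
    obtain ⟨i', hi'⟩ := exists_ne i
    have := single_lt_sum hi' (mem_univ i) (mem_univ i') (hL i') fun _ _ _ => Nat.zero_le _
    omega
  have hterm : ∀ k ≤ l,
      k ! * a k ≤ 2 ^ (l - k).choose 2 * (l + 1) ^ k * multinomial univ L := by
    intro k hk
    rw [ha k, mul_left_comm, mul_assoc]
    exact Nat.mul_le_mul_left _ (factorial_mul_multinomialChooseSum_le (by omega) hB)
  have hC : (0 : ℝ) < 2 ^ l.choose 2 * multinomial univ L := by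
    have := multinomial_pos univ L
    positivity
  calc 1 / 2 * ∑ k ∈ Icc 1 l, (2 : ℝ) ^ k * a k + 2 ^ l.choose 2 * multinomial univ L
      ≤ (1 / 2 * (exp 2 - 1 + 4 + 32 / 3) + 1) * (2 ^ l.choose 2 * multinomial univ L) := by
        linarith [sum_Icc_two_pow_mul_le hl hterm]
    _ < (exp 4 + 3) / 4 * (2 ^ l.choose 2 * multinomial univ L) :=
        mul_lt_mul_of_pos_right half_mul_exp_two_add_lt hC
    _ = (exp 4 + 3) / 4 * 2 ^ l.choose 2 * multinomial univ L := by ring
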